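/- arXiv:1202.1806 — 4 statements merged into one kernel-verified Lean document; each statement's English description precedes it below -/
import Mathlib

section
/- Let Ω(t) = (2/π)(t·arcsin(t/2) + √(4 - t²)) for |t| ≤ 2. Then for every integer k and every n ≥ 1 with |k+1| ≤ 2√n and |k| < 2√n, one has |√n·(Ω((k+1)/√n) - Ω(k/√n)) - (2/π)·arcsin(k/(2√n))| ≤ 10/√(4n - k²). -/
/-!
Ω is convex with Ω'(t) = (2/π)·arcsin(t/2) on (-2, 2), so by the mean value theorem the
first-order Taylor error of Ω over [a, b] lies between 0 and (b - a)(Ω'(b) - Ω'(a)). Writing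
x = sin θ, y = sin φ, the identity sin φ - sin θ = 2 sin((φ - θ)/2) cos((φ + θ)/2) and Jordan's
inequality bound the increment of arcsin by π (y - x)/√(1 - x²), uniformly up to the edge y = 1.
With a = k/√n and b - a = 1/√n this gives the estimate with the constant 2.
-/

open Real

/-- The Vershik–Kerov–Logan–Shepp limit shape of Plancherel Young diagrams. -/
noncomputable def Omega (t : ℝ) : ℝ :=
  if |t| ≤ 2 then (2 / π) * (t * Real.arcsin (t / 2) + Real.sqrt (4 - t ^ 2)) else |t|

open Set Filter

theorem sqrt_four_sub_sq (t : ℝ) : √(4 - t ^ 2) = 2 * √(1 - (t / 2) ^ 2) := by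
  rw [show 4 - t ^ 2 = 2 ^ 2 * (1 - (t / 2) ^ 2) by ring, sqrt_mul (by norm_num),
    sqrt_sq zero_le_two]

theorem arcsin_sub_arcsin_mul_sqrt_le {x y : ℝ} (hx : -1 ≤ x) (hxy : x ≤ y) (hy : y ≤ 1) :
    (arcsin y - arcsin x) * √(1 - x ^ 2) ≤ π * (y - x) := by
  set θ := arcsin x
  set φ := arcsin y
  have hθ : -(π / 2) ≤ θ := neg_pi_div_two_le_arcsin x
  have hφ : φ ≤ π / 2 := arcsin_le_pi_div_two y
  have hθφ : θ ≤ φ := arcsin_le_arcsin hxy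
  have hdiff : y - x = 2 * sin ((φ - θ) / 2) * cos ((φ + θ) / 2) := by
    rw [← sin_sub_sin, sin_arcsin hx (hxy.trans hy), sin_arcsin (hx.trans hxy) hy]
  have hmid : 0 ≤ cos ((φ + θ) / 2) := cos_nonneg_of_mem_Icc ⟨by linarith, by linarith⟩
  have hcos : cos θ ≤ 2 * cos ((φ + θ) / 2) := by
    have := cos_add_cos φ θ
    nlinarith [cos_nonneg_of_mem_Icc (x := φ) ⟨by linarith, hφ⟩, cos_le_one ((φ - θ) / 2)]
  have hjordan : 2 / π * ((φ - θ) / 2) ≤ sin ((φ - θ) / 2) :=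
    mul_le_sin (by linarith) (by linarith)
  have hcosθ : 0 ≤ cos θ := cos_arcsin_nonneg x
  have hsin : 0 ≤ sin ((φ - θ) / 2) :=
    sin_nonneg_of_nonneg_of_le_pi (by linarith) (by linarith)
  rw [← cos_arcsin x]
  calc (φ - θ) * cos θ = π * (2 / π * ((φ - θ) / 2) * cos θ) := by field_simp
    _ ≤ π * (sin ((φ - θ) / 2) * (2 * cos ((φ + θ) / 2))) := by gcongr
    _ = π * (y - x) := by rw [hdiff]; ring

theorem abs_sub_sub_mul_le_of_monotoneOn {f f' : ℝ → ℝ} {a b : ℝ} (hab : a ≤ b)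
    (hf : ContinuousOn f (Icc a b)) (hf' : ∀ x ∈ Ioo a b, HasDerivAt f (f' x) x)
    (hmono : MonotoneOn f' (Icc a b)) :
    |f b - f a - (b - a) * f' a| ≤ (b - a) * (f' b - f' a) := by
  rcases hab.eq_or_lt with rfl | hab
  · simp
  obtain ⟨c, hc, hslope⟩ := exists_hasDerivAt_eq_slope f f' hab hf hf'
  have hc' : c ∈ Icc a b := Ioo_subset_Icc_self hc
  have hincr : f b - f a = (b - a) * f' c := by
    rw [hslope]; field_simp [(sub_pos.2 hab).ne']
  have hlo := hmono (left_mem_Icc.2 hab.le) hc' hc.1.le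
  have hhi := hmono hc' (right_mem_Icc.2 hab.le) hc.2.le
  rw [hincr, ← mul_sub, abs_of_nonneg (mul_nonneg (sub_pos.2 hab).le (sub_nonneg.2 hlo))]
  gcongr

theorem Omega_eqOn :
    EqOn Omega (fun t ↦ (2 / π) * (t * arcsin (t / 2) + √(4 - t ^ 2))) (Icc (-2) 2) :=
  fun _ ht ↦ if_pos (abs_le.2 ht)

theorem continuousOn_Omega : ContinuousOn Omega (Icc (-2) 2) :=
  ContinuousOn.congr (by fun_prop) Omega_eqOn

theorem hasDerivAt_Omega {t : ℝ} (ht : t ∈ Ioo (-2) 2) :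
    HasDerivAt Omega ((2 / π) * arcsin (t / 2)) t := by
  have hpos : 0 < 4 - t ^ 2 := by nlinarith [ht.1, ht.2]
  have harcsin : HasDerivAt (fun x ↦ arcsin (x / 2)) (1 / √(1 - (t / 2) ^ 2) * (1 / 2)) t :=
    (hasDerivAt_arcsin (by linarith [ht.1]) (by linarith [ht.2])).comp t
      ((hasDerivAt_id t).div_const 2)
  have hformula := (((hasDerivAt_id t).mul harcsin).add
    (((hasDerivAt_pow 2 t).const_sub 4).sqrt hpos.ne')).const_mul (2 / π)
  refine (hformula.congr_of_eventuallyEq ?_).congr_deriv ?_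
  · exact eventuallyEq_of_mem (Ioo_mem_nhds ht.1 ht.2) fun x hx ↦
      Omega_eqOn (Ioo_subset_Icc_self hx)
  · rw [sqrt_four_sub_sq]
    simp only [id, Nat.cast_ofNat]
    field_simp
    ring

theorem abs_Omega_sub_sub_le {a b : ℝ} (ha : -2 < a) (hab : a < b) (hb : b ≤ 2) :
    |Omega b - Omega a - (b - a) * ((2 / π) * arcsin (a / 2))| ≤
      2 * (b - a) ^ 2 / √(4 - a ^ 2) := by
  have hmono : Monotone fun t ↦ (2 / π) * arcsin (t / 2) := fun x y hxy ↦
    mul_le_mul_of_nonneg_left (monotone_arcsin (by linarith)) (by positivity)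
  have htaylor := abs_sub_sub_mul_le_of_monotoneOn hab.le
    (continuousOn_Omega.mono (Icc_subset_Icc ha.le hb))
    (fun x hx ↦ hasDerivAt_Omega ⟨ha.trans hx.1, hx.2.trans_le hb⟩) (hmono.monotoneOn _)
  have harcsin := arcsin_sub_arcsin_mul_sqrt_le (x := a / 2) (y := b / 2) (by linarith)
    (by linarith) (by linarith)
  have hroot : 0 < √(1 - (a / 2) ^ 2) := sqrt_pos.2 (by nlinarith)
  rw [sqrt_four_sub_sq, le_div_iff₀ (by positivity)]
  calc _ ≤ (b - a) * (2 / π * arcsin (b / 2) - 2 / π * arcsin (a / 2)) *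
          (2 * √(1 - (a / 2) ^ 2)) := by gcongr
    _ = (b - a) * (4 / π) * ((arcsin (b / 2) - arcsin (a / 2)) * √(1 - (a / 2) ^ 2)) := by
        ring
    _ ≤ (b - a) * (4 / π) * (π * (b / 2 - a / 2)) := by gcongr
    _ = 2 * (b - a) ^ 2 := by field_simp; ring

theorem omega_increment_estimate_general (k : ℤ) (n : ℕ)
    (h1 : |(k : ℝ) + 1| ≤ 2 * Real.sqrt n) (h2 : |(k : ℝ)| < 2 * Real.sqrt n) :
    |Real.sqrt n * (Omega (((k : ℝ) + 1) / Real.sqrt n) - Omega ((k : ℝ) / Real.sqrt n)) -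
        (2 / π) * Real.arcsin ((k : ℝ) / (2 * Real.sqrt n))| ≤
      10 / Real.sqrt (4 * n - (k : ℝ) ^ 2) := by
  set s := √(n : ℝ)
  have hs : 0 < s := by linarith [abs_nonneg (k : ℝ)]
  set a := (k : ℝ) / s with ha_def
  set b := ((k : ℝ) + 1) / s with hb_def
  have ha : -2 < a := (lt_div_iff₀ hs).2 (by linarith [(abs_lt.1 h2).1])
  have hb : b ≤ 2 := (div_le_iff₀ hs).2 (by linarith [(abs_le.1 h1).2])
  have hstep : b - a = s⁻¹ := by rw [ha_def, hb_def]; field_simp; ring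
  have hab : a < b := by linarith [inv_pos.2 hs]
  have hscale : √(4 * n - (k : ℝ) ^ 2) = s * √(4 - a ^ 2) := by
    have : 4 * n - (k : ℝ) ^ 2 = s ^ 2 * (4 - a ^ 2) := by
      rw [ha_def]
      field_simp
      rw [sq_sqrt (Nat.cast_nonneg n)]
    rw [this, sqrt_mul (sq_nonneg s), sqrt_sq hs.le]
  have hincr : s * (Omega b - Omega a) - 2 / π * arcsin ((k : ℝ) / (2 * s)) =
      s * (Omega b - Omega a - (b - a) * ((2 / π) * arcsin (a / 2))) := by
    rw [hstep, ha_def]; field_simp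
  calc _ = s * |Omega b - Omega a - (b - a) * ((2 / π) * arcsin (a / 2))| := by
        rw [hincr, abs_mul, abs_of_pos hs]
    _ ≤ s * (2 * (b - a) ^ 2 / √(4 - a ^ 2)) := by gcongr; exact abs_Omega_sub_sub_le ha hab hb
    _ = 2 / √(4 * n - (k : ℝ) ^ 2) := by rw [hstep, hscale]; field_simp
    _ ≤ 10 / √(4 * n - (k : ℝ) ^ 2) := by gcongr; norm_num

theorem omega_increment_estimate (k : ℤ) (n : ℕ) (hn : 1 ≤ n)
    (h1 : |(k : ℝ) + 1| ≤ 2 * Real.sqrt n) (h2 : |(k : ℝ)| < 2 * Real.sqrt n) :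
    |Real.sqrt n * (Omega (((k : ℝ) + 1) / Real.sqrt n) - Omega ((k : ℝ) / Real.sqrt n)) -
        (2 / π) * Real.arcsin ((k : ℝ) / (2 * Real.sqrt n))| ≤
      10 / Real.sqrt (4 * n - (k : ℝ) ^ 2) :=
  omega_increment_estimate_general k n h1 h2
end

section
/- With S(z,u) = z - 1/z - u·log z, u = 2cos φ, φ ∈ (0,π), A ∈ ℂ nonzero, and z(t) = e^{iφ} + A·t, the third derivative of t ↦ S(z(t), u) at t = 0 equals 2A³·e^{-4iφ}·(3 - u·e^{iφ}). -/
/-!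
Since `t ↦ e^{iφ} + A t` is affine, the third derivative of `t ↦ S(e^{iφ} + A t, u)` at `0` is
`A³ S'''(e^{iφ})`, and `S''' = 6/z⁴ - 2u/z³` away from the branch cut of `log`, on which
`e^{iφ}` does not lie because `sin φ > 0`.
-/

open Complex

/-- Phase function in Okounkov's contour integral representation of the Bessel kernel. -/
noncomputable def S (z : ℂ) (u : ℝ) : ℂ := z - 1 / z - (u : ℂ) * Complex.log z

section AffineReparametrization

variable {𝕜 F : Type*} [NontriviallyNormedField 𝕜] [NormedAddCommGroup F] [NormedSpace 𝕜 F]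

theorem iteratedDeriv_comp_mul_left (n : ℕ) (f : 𝕜 → F) (a : 𝕜) :
    iteratedDeriv n (fun x => f (a * x)) = fun x => a ^ n • iteratedDeriv n f (a * x) := by
  induction n with
  | zero => simp
  | succ n ih =>
    funext x
    rw [iteratedDeriv_succ, ih, deriv_fun_const_smul_field,
      deriv_comp_mul_left a (iteratedDeriv n f), iteratedDeriv_succ, pow_succ, mul_smul]

theorem iteratedDeriv_comp_const_add_mul (n : ℕ) (f : 𝕜 → F) (b a : 𝕜) :
    iteratedDeriv n (fun x => f (b + a * x)) = fun x => a ^ n • iteratedDeriv n f (b + a * x) := by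
  rw [iteratedDeriv_comp_mul_left n (fun y => f (b + y)) a, iteratedDeriv_comp_const_add]

end AffineReparametrization

theorem iteratedDeriv_three_S {z : ℂ} (hz : z ∈ slitPlane) (u : ℝ) :
    iteratedDeriv 3 (fun w => S w u) z = 6 / z ^ 4 - 2 * u / z ^ 3 := by
  have hinv : ContDiffAt ℂ 3 (fun w : ℂ => 1 / w) z := by
    simpa only [one_div] using contDiffAt_inv ℂ (slitPlane_ne_zero hz)
  have hlog : ContDiffAt ℂ 3 (fun w => (u : ℂ) * log w) z :=
    contDiffAt_const.mul (contDiffAt_log hz)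
  unfold S
  rw [iteratedDeriv_fun_sub (contDiffAt_fun_id.sub hinv) hlog,
    iteratedDeriv_fun_sub contDiffAt_fun_id hinv, iteratedDeriv_const_mul_field,
    iteratedDeriv_succ_log hz, iteratedDeriv_fun_id]
  simp only [one_div]
  rw [iteratedDeriv_eq_iterate, iter_deriv_inv]
  norm_num [Nat.factorial, zpow_neg]
  ring

theorem exp_I_mul_mem_slitPlane {φ : ℝ} (hφ : φ ∈ Set.Ioo 0 Real.pi) :
    Complex.exp (I * φ) ∈ slitPlane := by
  rw [mem_slitPlane_iff, mul_comm, exp_ofReal_mul_I_im]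
  exact Or.inr (Real.sin_pos_of_pos_of_lt_pi hφ.1 hφ.2).ne'

theorem third_derivative_at_critical_point_general (φ : ℝ) (hφ : φ ∈ Set.Ioo 0 Real.pi)
    (A : ℂ) :
    iteratedDeriv 3 (fun t : ℂ => S (Complex.exp (I * φ) + A * t) (2 * Real.cos φ)) 0 =
      2 * A ^ 3 * Complex.exp (-4 * I * φ) * (3 - (2 * Real.cos φ : ℝ) * Complex.exp (I * φ)) := by
  have hexp : Complex.exp (-4 * I * φ) = Complex.exp (I * φ) ^ (-4 : ℤ) := by
    rw [← exp_int_mul]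
    push_cast
    ring_nf
  have hexp_ne : Complex.exp (I * φ) ≠ 0 := exp_ne_zero _
  simp only [iteratedDeriv_comp_const_add_mul 3 (fun w => S w (2 * Real.cos φ)), mul_zero,
    add_zero, iteratedDeriv_three_S (exp_I_mul_mem_slitPlane hφ), hexp, smul_eq_mul]
  field_simp
  ring

theorem third_derivative_at_critical_point (φ : ℝ) (hφ : φ ∈ Set.Ioo 0 Real.pi)
    (A : ℂ) (hA : A ≠ 0) :
    iteratedDeriv 3 (fun t : ℂ => S (Complex.exp (I * φ) + A * t) (2 * Real.cos φ)) 0 =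
      2 * A ^ 3 * Complex.exp (-4 * I * φ) * (3 - (2 * Real.cos φ : ℝ) * Complex.exp (I * φ)) :=
  third_derivative_at_critical_point_general φ hφ A
end

section
/- For integers y < 2√n - n^{1/6} and i with i < y, the sum over integers j from y+1 to ⌊2√n - n^{1/6}⌋ of (1/(j-i)²)·(√(2√n - i)/√(2√n - j) + √(2√n - j)/√(2√n - i)) is bounded by C/(y - i + 1) for an absolute constant C > 0. -/
open Real Finset

/-! The summand is `2 F'(j)` for `F(t) = -(1/(t-i)) √(2√n-t)/√(2√n-i)`, so the sum is a Riemann sum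
of an exact derivative. Discretely, `bulkPotential` (three times `-F`) decreases by at least the
summand at each step: the loss in `1/(t-i)` pays for the `√u/(t-i)²` part and the gain
`√(u+1) - √u ≥ 1/(3√u)` in the numerator pays for the `1/((t-i)√u)` part, with `u = 2√n - t`.
Telescoping bounds the sum by the potential at `y`, which is at most `3/(y-i)`. -/

lemma sum_Icc_le_sub_of_le_sub {M : Type*} [AddCommGroup M] [PartialOrder M]
    [IsOrderedAddMonoid M] (f G : ℤ → M) {a b : ℤ} (hab : a ≤ b)
    (h : ∀ j ∈ Icc (a + 1) b, f j ≤ G (j - 1) - G j) :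
    ∑ j ∈ Icc (a + 1) b, f j ≤ G a - G b := by
  induction b, hab using Int.leInduction with
  | base => simp
  | succ b hab ih =>
    rw [← insert_Icc_right_eq_Icc_add_one (by omega), sum_insert (by simp)]
    have hstep := h (b + 1) (by simp; omega)
    have := ih fun j hj => h j (by simp at hj ⊢; omega)
    simpa only [add_sub_cancel_right, sub_add_sub_cancel'] using add_le_add hstep this

lemma one_div_three_sqrt_le_sqrt_add_one_sub_sqrt {u : ℝ} (hu : 1 ≤ u) :
    1 / (3 * √u) ≤ √(u + 1) - √u := by
  have ha : 1 ≤ √u := one_le_sqrt.2 hu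
  have hb : √(u + 1) ≤ 2 * √u := by
    rw [sqrt_le_left (by positivity), mul_pow, sq_sqrt (by linarith)]; linarith
  have hab : (√(u + 1) - √u) * (√(u + 1) + √u) = 1 := by
    rw [mul_comm, ← sq_sub_sq, sq_sqrt (by linarith), sq_sqrt (by linarith)]; ring
  rw [div_le_iff₀ (by positivity)]
  nlinarith [sqrt_le_sqrt (show u ≤ u + 1 by linarith)]

lemma one_div_sq_mul_sqrt_ratio_add_le {u k : ℝ} (hu : 1 ≤ u) (hk : 1 < k) :
    1 / k ^ 2 * (√(u + k) / √u + √u / √(u + k))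
      ≤ 3 / √(u + k) * (√(u + 1) / (k - 1) - √u / k) := by
  have hgap := one_div_three_sqrt_le_sqrt_add_one_sub_sqrt hu
  have hk1 : 0 < k - 1 := by linarith
  have hr : 0 < √(u + k) := sqrt_pos.2 (by linarith)
  have hr2 : √(u + k) ^ 2 = √u ^ 2 + k := by
    rw [sq_sqrt (by linarith), sq_sqrt (by linarith)]
  have hsplit : 1 / k ^ 2 * (√(u + k) / √u + √u / √(u + k))
      = 1 / √(u + k) * (2 * √u / k ^ 2 + 1 / (k * √u)) := by
    field_simp; rw [hr2]; ring
  have hsplit' : √(u + 1) / (k - 1) - √u / k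
      = (√(u + 1) - √u) / (k - 1) + √u / (k * (k - 1)) := by
    field_simp; ring
  have h1 : 2 * √u / k ^ 2 ≤ 3 * (√u / (k * (k - 1))) := by
    rw [← mul_div_assoc, sq]; gcongr <;> linarith
  have h2 : 1 / (k * √u) ≤ 3 * ((√(u + 1) - √u) / (k - 1)) := by
    calc 1 / (k * √u) = 1 / (3 * √u) * 3 / k := by field_simp
      _ ≤ (√(u + 1) - √u) * 3 / (k - 1) := by
        gcongr
        · exact mul_nonneg (le_trans (by positivity) hgap) zero_le_three
        · linarith
      _ = _ := by ring
  calc _ = 1 / √(u + k) * (2 * √u / k ^ 2 + 1 / (k * √u)) := hsplit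
    _ ≤ 1 / √(u + k) * (3 * (√u / (k * (k - 1))) + 3 * ((√(u + 1) - √u) / (k - 1))) := by
      gcongr 1 / _ * ?_
      exact add_le_add h1 h2
    _ = _ := by rw [hsplit']; ring

noncomputable def bulkPotential (B x t : ℝ) : ℝ := 3 / (t - x) * (√(B - t) / √(B - x))

lemma bulkPotential_nonneg {B x t : ℝ} (hxt : x ≤ t) : 0 ≤ bulkPotential B x t := by
  unfold bulkPotential
  have : 0 ≤ t - x := by linarith
  positivity

lemma bulkPotential_le {B x t : ℝ} (hxt : x ≤ t) : bulkPotential B x t ≤ 3 / (t - x) := by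
  unfold bulkPotential
  refine mul_le_of_le_one_right (by positivity) (div_le_one_of_le₀ ?_ (sqrt_nonneg _))
  exact sqrt_le_sqrt (by linarith)

lemma one_div_sq_mul_sqrt_ratio_add_le_bulkPotential_sub {B x t : ℝ} (hxt : x + 1 < t)
    (hBt : B - t = 0 ∨ 1 ≤ B - t) :
    1 / (t - x) ^ 2 * (√(B - x) / √(B - t) + √(B - t) / √(B - x))
      ≤ bulkPotential B x (t - 1) - bulkPotential B x t := by
  unfold bulkPotential
  rcases hBt with hBt | hBt
  · have : 0 < t - 1 - x := by linarith
    simp only [hBt, sqrt_zero, div_zero, zero_div, add_zero, mul_zero, sub_zero]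
    positivity
  · have h := one_div_sq_mul_sqrt_ratio_add_le hBt (show 1 < t - x by linarith)
    rw [show B - t + (t - x) = B - x by ring, show B - t + 1 = B - (t - 1) by ring] at h
    convert h using 1
    ring

/-- The case `2√n - j = 0` occurs only for `n = 0`, where the summand vanishes because `x / 0 = 0`. -/
lemma two_sqrt_sub_eq_zero_or_one_le {n : ℕ} {j : ℤ}
    (hj : j ≤ ⌊2 * √n - (n : ℝ) ^ ((1 : ℝ) / 6)⌋) :
    2 * √n - j = 0 ∨ 1 ≤ 2 * √n - j := by
  rcases n.eq_zero_or_pos with rfl | hn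
  · have : j ≤ 0 := by simpa using hj
    rcases this.eq_or_lt with rfl | hj0
    · simp
    · right
      have : (j : ℝ) ≤ -1 := by exact_mod_cast (show j ≤ -1 by omega)
      simp only [CharP.cast_eq_zero, sqrt_zero, mul_zero]
      linarith
  · right
    have h1 : (1 : ℝ) ≤ (n : ℝ) ^ ((1 : ℝ) / 6) := one_le_rpow (by exact_mod_cast hn) (by norm_num)
    have h2 := Int.le_floor.1 hj
    linarith

theorem bulk_sum_estimate :
    ∃ C : ℝ, 0 < C ∧ ∀ (n : ℕ) (y i : ℤ),
      (y : ℝ) < 2 * Real.sqrt n - (n : ℝ) ^ ((1 : ℝ) / 6) → i < y →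
      ∑ j ∈ Finset.Icc (y + 1) ⌊2 * Real.sqrt n - (n : ℝ) ^ ((1 : ℝ) / 6)⌋,
          (1 / ((j : ℝ) - i) ^ 2) *
            (Real.sqrt (2 * Real.sqrt n - i) / Real.sqrt (2 * Real.sqrt n - j) +
              Real.sqrt (2 * Real.sqrt n - j) / Real.sqrt (2 * Real.sqrt n - i)) ≤
        C / ((y : ℝ) - i + 1) := by
  refine ⟨6, by norm_num, fun n y i _ hiy => ?_⟩
  have hyi : (i : ℝ) + 1 ≤ y := by exact_mod_cast hiy
  rcases le_or_gt y ⌊2 * √n - (n : ℝ) ^ ((1 : ℝ) / 6)⌋ with hym | hym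
  · calc _ ≤ bulkPotential (2 * √n) i y - bulkPotential (2 * √n) i _ := by
          refine sum_Icc_le_sub_of_le_sub _ (fun j => bulkPotential (2 * √n) i j) hym
            fun j hj => ?_
          rw [mem_Icc] at hj
          have hij : (i : ℝ) + 1 < j := by exact_mod_cast (show i + 1 < j by omega)
          push_cast
          exact one_div_sq_mul_sqrt_ratio_add_le_bulkPotential_sub hij
            (two_sqrt_sub_eq_zero_or_one_le hj.2)
      _ ≤ bulkPotential (2 * √n) i y :=
          sub_le_self _ (bulkPotential_nonneg (by exact_mod_cast (hiy.trans_le hym).le))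
      _ ≤ 3 / ((y : ℝ) - i) := bulkPotential_le (by linarith)
      _ ≤ 6 / ((y : ℝ) - i + 1) := by
          rw [div_le_div_iff₀ (by linarith) (by linarith)]
          linarith
  · rw [Icc_eq_empty (by omega), sum_empty]
    exact div_nonneg (by norm_num) (by linarith)
end

section
/- Suppose (f_n) is a sequence of entire functions with f_n(z) = e^{-z} ∑_{k≥0} f_{nk} z^k / k!, and there exist constants f_∞, γ and α ∈ (0, 1/4) such that max_{|z|=n} |f_n(z)| = O(e^{γ√n}) and max_{|z/n - 1| ≤ n^{-α}} |f_n(z) - f_∞|·e^{-γ|z-n|/√n} = o(1) as n → ∞. Then f_{nn} → f_∞. -/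
/-!
Subtracting `f∞ eᶻ` from `eᶻ fₙ(z)` and applying Cauchy's estimate on the circle `|z| = n`,
`|fₙₙ - f∞| ≤ (2π)⁻¹ ∫_{-π}^{π} n!/nⁿ · e^{n cos θ} |fₙ(n e^{iθ}) - f∞| dθ`.
By Stirling `n! eⁿ / nⁿ ≤ e √n`, and `cos θ - 1 ≤ -2θ²/π²`. On the arc `|θ| ≤ n^{-α}` the
local hypothesis and `|γ| √n |θ| ≤ nθ²/π² + γ²π²/4` leave `√n` times a Gaussian of width
`1/√n`, whose integral is bounded, so this part is `O(ε)`. On the rest of the circle the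
growth `e^{γ√n}` is beaten by `e^{-2n^{1-2α}/π²}`, because `1 - 2α > 1/2`.
-/

open Filter MeasureTheory Nat Real Topology

theorem hasFPowerSeriesOnBall_ofScalars_of_hasSum {c : ℕ → ℂ} {g : ℂ → ℂ}
    (h : ∀ z, HasSum (fun k => c k * z ^ k) (g z)) :
    HasFPowerSeriesOnBall g (FormalMultilinearSeries.ofScalars ℂ c) 0 ⊤ where
  r_le := by
    refine ENNReal.le_of_forall_nnreal_lt fun r _ => ?_
    refine (FormalMultilinearSeries.ofScalars ℂ c).le_radius_of_tendsto (l := 0) ?_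
    simpa [FormalMultilinearSeries.ofScalars_norm] using
      (h r).summable.tendsto_atTop_zero.norm
  r_pos := ENNReal.zero_lt_top
  hasSum {y} _ := by simpa [FormalMultilinearSeries.ofScalars_apply_eq, mul_comm] using h y

theorem norm_coeff_le_intervalIntegral {c : ℕ → ℂ} {g : ℂ → ℂ}
    (h : ∀ z, HasSum (fun k => c k * z ^ k) (g z)) {R : ℝ} (hR : 0 < R) (n : ℕ) :
    ‖c n‖ ≤ (2 * π)⁻¹ * (R ^ n)⁻¹ * ∫ θ in -π..π, ‖g (circleMap 0 R θ)‖ := by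
  lift R to NNReal using hR.le
  have hps := hasFPowerSeriesOnBall_ofScalars_of_hasSum h
  have hcauchy : HasFPowerSeriesOnBall g (cauchyPowerSeries g 0 R) 0 R :=
    (hps.differentiableOn.mono (by simp)).hasFPowerSeriesOnBall (by exact_mod_cast hR)
  have hper : Function.Periodic (fun θ => ‖g (circleMap 0 R θ)‖) (2 * π) :=
    fun θ => by simp only [periodic_circleMap 0 R θ]
  calc ‖c n‖ = ‖cauchyPowerSeries g 0 R n‖ := by
        rw [← hps.hasFPowerSeriesAt.eq_formalMultilinearSeries hcauchy.hasFPowerSeriesAt,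
          FormalMultilinearSeries.ofScalars_norm]
    _ ≤ _ := norm_cauchyPowerSeries_le g 0 R n
    _ = _ := by
      have hshift := hper.intervalIntegral_add_eq 0 (-π)
      rw [zero_add, show -π + 2 * π = π by ring] at hshift
      rw [hshift, abs_of_pos hR, inv_pow]
      ring

section PoissonCoefficients

variable {b : ℕ → ℂ} {f : ℂ → ℂ}

theorem hasSum_exp_mul_sub (h : ∀ z, HasSum (fun k => b k * z ^ k / k !) (Complex.exp z * f z))
    (w z : ℂ) : HasSum (fun k => (b k - w) / k ! * z ^ k) (Complex.exp z * (f z - w)) := by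
  have hexp : HasSum (fun k => w * z ^ k / k !) (w * Complex.exp z) := by
    simpa [Complex.exp_eq_exp_ℂ, mul_div_assoc] using
      (NormedSpace.expSeries_div_hasSum_exp z).mul_left w
  rw [mul_sub, mul_comm _ w]
  exact ((h z).sub hexp).congr_fun fun k => by ring

theorem norm_sub_le_intervalIntegral_exp_mul
    (h : ∀ z, HasSum (fun k => b k * z ^ k / k !) (Complex.exp z * f z)) (w : ℂ) {R : ℝ}
    (hR : 0 < R) (n : ℕ) :
    ‖b n - w‖ ≤ (2 * π)⁻¹ *
      ∫ θ in -π..π, n ! / R ^ n * exp (R * cos θ) * ‖f (circleMap 0 R θ) - w‖ := by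
  have hcoeff := norm_coeff_le_intervalIntegral (hasSum_exp_mul_sub h w) hR n
  have hnorm (θ : ℝ) : ‖Complex.exp (circleMap 0 R θ) * (f (circleMap 0 R θ) - w)‖ =
      exp (R * cos θ) * ‖f (circleMap 0 R θ) - w‖ := by
    simp [Complex.norm_exp, circleMap]
  simp only [hnorm, norm_div, Complex.norm_natCast] at hcoeff
  rw [div_le_iff₀ (by positivity)] at hcoeff
  refine hcoeff.trans_eq ?_
  simp only [← intervalIntegral.integral_const_mul, ← intervalIntegral.integral_mul_const]
  congr 1 with θ
  ring

end PoissonCoefficients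

theorem factorial_le_exp_one_mul_sqrt_mul_pow {n : ℕ} (hn : n ≠ 0) :
    (n ! : ℝ) ≤ exp 1 * √n * (n / exp 1) ^ n := by
  have hmono : Stirling.stirlingSeq n ≤ Stirling.stirlingSeq 1 := by
    obtain ⟨m, rfl⟩ := Nat.exists_eq_succ_of_ne_zero hn
    exact Stirling.stirlingSeq'_antitone (Nat.zero_le m)
  rw [Stirling.stirlingSeq_one, Stirling.stirlingSeq,
    div_le_div_iff₀ (by positivity) (by positivity), sqrt_mul zero_le_two] at hmono
  have h2 : √(2 : ℝ) ≠ 0 := by positivity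
  calc (n ! : ℝ) = n ! * √2 / √2 := by field_simp
    _ ≤ exp 1 * (√2 * √n * (n / exp 1) ^ n) / √2 := by gcongr
    _ = exp 1 * √n * (n / exp 1) ^ n := by field_simp

theorem factorial_div_pow_mul_exp_mul_cos_le {n : ℕ} (hn : n ≠ 0) {θ : ℝ} (hθ : |θ| ≤ π) :
    n ! / (n : ℝ) ^ n * exp (n * cos θ) ≤ exp 1 * √n * exp (-(2 * n / π ^ 2) * θ ^ 2) := by
  have hn0 : (0 : ℝ) < n := by positivity
  have hcos : n * cos θ ≤ n + -(2 * n / π ^ 2) * θ ^ 2 := by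
    have := mul_le_mul_of_nonneg_left (cos_le_one_sub_mul_cos_sq hθ) hn0.le
    linarith [show (n : ℝ) * (1 - 2 / π ^ 2 * θ ^ 2) = n + -(2 * n / π ^ 2) * θ ^ 2 by ring]
  calc n ! / (n : ℝ) ^ n * exp (n * cos θ)
      ≤ exp 1 * √n * (n / exp 1) ^ n / (n : ℝ) ^ n * exp (n + -(2 * n / π ^ 2) * θ ^ 2) := by
        gcongr
        exact factorial_le_exp_one_mul_sqrt_mul_pow hn
    _ = exp 1 * √n * exp (-(2 * n / π ^ 2) * θ ^ 2) := by
        rw [exp_add, div_pow, ← exp_nat_mul]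
        field_simp

theorem circleMap_div_sub_one {R : ℝ} (hR : R ≠ 0) (θ : ℝ) :
    circleMap 0 R θ / R - 1 = Complex.exp (Complex.I * θ) - 1 := by
  rw [circleMap, zero_add, mul_div_cancel_left₀ _ (by exact_mod_cast hR), mul_comm]

theorem norm_circleMap_sub_le {R : ℝ} (hR : 0 ≤ R) (θ : ℝ) :
    ‖circleMap 0 R θ - R‖ ≤ R * |θ| := by
  have : circleMap 0 R θ - R = R * (Complex.exp (Complex.I * θ) - 1) := by
    rw [circleMap, zero_add, mul_comm (θ : ℂ)]; ring
  rw [this, norm_mul, Complex.norm_real, Real.norm_of_nonneg hR]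
  gcongr
  exact norm_exp_I_mul_ofReal_sub_one_le

theorem intervalIntegral_exp_neg_mul_sq_le {c : ℝ} (hc : 0 < c) {a b : ℝ} (hab : a ≤ b) :
    ∫ θ in a..b, exp (-c * θ ^ 2) ≤ √(π / c) := by
  rw [intervalIntegral.integral_of_le hab, ← integral_gaussian]
  exact setIntegral_le_integral (integrable_exp_neg_mul_sq hc)
    (Eventually.of_forall fun θ => (exp_pos _).le)

theorem sqrt_mul_intervalIntegral_exp_neg_div_sq_mul_sq_le {R : ℝ} (hR : 0 < R) :
    √R * ∫ θ in -π..π, exp (-(R / π ^ 2) * θ ^ 2) ≤ π * √π := by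
  calc √R * ∫ θ in -π..π, exp (-(R / π ^ 2) * θ ^ 2) ≤ √R * √(π / (R / π ^ 2)) := by
        gcongr
        exact intervalIntegral_exp_neg_mul_sq_le (by positivity) (by linarith [pi_pos])
    _ = π * √π := by
        rw [← sqrt_mul hR.le, show R * (π / (R / π ^ 2)) = π ^ 2 * π by field_simp,
          sqrt_mul (sq_nonneg π), sqrt_sq pi_pos.le]

section CauchyIntegrand

variable {f : ℂ → ℂ} {w : ℂ} {R γ α ε M θ : ℝ}

theorem exp_mul_norm_sub_le_of_abs_le (hR : 0 < R) (hε : 0 ≤ ε)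
    (hloc : ∀ z : ℂ, ‖z / R - 1‖ ≤ R ^ (-α) → ‖f z - w‖ * exp (-γ * ‖z - R‖ / √R) ≤ ε)
    (hθ : |θ| ≤ R ^ (-α)) :
    exp (-(2 * R / π ^ 2) * θ ^ 2) * ‖f (circleMap 0 R θ) - w‖ ≤
      ε * exp (γ ^ 2 * π ^ 2 / 4) * exp (-(R / π ^ 2) * θ ^ 2) := by
  set z := circleMap 0 R θ
  have hsqrt : 0 < √R := sqrt_pos.2 hR
  have hfz : ‖f z - w‖ ≤ ε * exp (γ * ‖z - R‖ / √R) := by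
    have := hloc z ((circleMap_div_sub_one hR.ne' θ ▸ norm_exp_I_mul_ofReal_sub_one_le).trans hθ)
    rwa [neg_mul, neg_div, exp_neg, ← div_eq_mul_inv, div_le_iff₀ (exp_pos _)] at this
  have hdist : γ * ‖z - R‖ / √R ≤ |γ| * (√R * |θ|) := by
    rw [div_le_iff₀ hsqrt]
    calc γ * ‖z - R‖ ≤ |γ| * (R * |θ|) := by
          gcongr
          · exact le_abs_self γ
          · exact norm_circleMap_sub_le hR.le θ
      _ = |γ| * (√R * |θ|) * √R := by
          linear_combination (|γ| * |θ|) * (mul_self_sqrt hR.le).symm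
  have hamgm : |γ| * (√R * |θ|) ≤ R / π ^ 2 * θ ^ 2 + γ ^ 2 * π ^ 2 / 4 := by
    have hsq : R / π ^ 2 * θ ^ 2 + γ ^ 2 * π ^ 2 / 4 - |γ| * (√R * |θ|) =
        (√R * |θ| / π - |γ| * π / 2) ^ 2 := by
      rw [sub_sq, div_pow, mul_pow, sq_sqrt hR.le, sq_abs, div_pow, mul_pow, sq_abs]
      field_simp
      ring
    linarith [sq_nonneg (√R * |θ| / π - |γ| * π / 2)]
  calc exp (-(2 * R / π ^ 2) * θ ^ 2) * ‖f z - w‖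
      ≤ exp (-(2 * R / π ^ 2) * θ ^ 2) * (ε * exp (R / π ^ 2 * θ ^ 2 + γ ^ 2 * π ^ 2 / 4)) := by
        grw [hfz, hdist, hamgm]
    _ = ε * exp (γ ^ 2 * π ^ 2 / 4) * exp (-(R / π ^ 2) * θ ^ 2) := by
        rw [mul_left_comm, mul_assoc, ← exp_add, ← exp_add]
        ring_nf

theorem exp_mul_norm_sub_le_of_lt_abs (hR : 0 < R) (hM : ∀ z : ℂ, ‖z‖ = R → ‖f z‖ ≤ M)
    (hθ : R ^ (-α) < |θ|) :
    exp (-(2 * R / π ^ 2) * θ ^ 2) * ‖f (circleMap 0 R θ) - w‖ ≤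
      (M + ‖w‖) * exp (-(2 / π ^ 2) * R ^ (1 - 2 * α)) := by
  have hsq : R ^ (1 - 2 * α) ≤ R * θ ^ 2 := by
    rw [sub_eq_add_neg, rpow_add hR, rpow_one, ← sq_abs θ,
      show -(2 * α) = -α * (2 : ℕ) by push_cast; ring, rpow_mul_natCast hR.le]
    gcongr
  have hexp : exp (-(2 * R / π ^ 2) * θ ^ 2) ≤ exp (-(2 / π ^ 2) * R ^ (1 - 2 * α)) := by
    rw [exp_le_exp, show -(2 * R / π ^ 2) * θ ^ 2 = -(2 / π ^ 2) * (R * θ ^ 2) by ring]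
    exact mul_le_mul_of_nonpos_left hsq (by simp only [Left.neg_nonpos_iff]; positivity)
  have hf : ‖f (circleMap 0 R θ) - w‖ ≤ M + ‖w‖ :=
    (norm_sub_le _ _).trans (by gcongr; exact hM _ (by simp [hR.le]))
  rw [mul_comm (M + ‖w‖)]
  exact mul_le_mul hexp hf (norm_nonneg _) (exp_pos _).le

theorem factorial_div_pow_mul_exp_mul_cos_mul_norm_sub_le {n : ℕ} (hn : n ≠ 0) (hε : 0 ≤ ε)
    (hloc : ∀ z : ℂ, ‖z / n - 1‖ ≤ (n : ℝ) ^ (-α) →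
      ‖f z - w‖ * exp (-γ * ‖z - n‖ / √n) ≤ ε)
    (hM : ∀ z : ℂ, ‖z‖ = n → ‖f z‖ ≤ M) (hθ : |θ| ≤ π) :
    n ! / (n : ℝ) ^ n * exp (n * cos θ) * ‖f (circleMap 0 n θ) - w‖ ≤
      exp 1 * √n * (ε * exp (γ ^ 2 * π ^ 2 / 4) * exp (-(n / π ^ 2) * θ ^ 2) +
        (M + ‖w‖) * exp (-(2 / π ^ 2) * (n : ℝ) ^ (1 - 2 * α))) := by
  have hn0 : (0 : ℝ) < n := by positivity
  have hM0 : 0 ≤ M + ‖w‖ :=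
    add_nonneg ((norm_nonneg _).trans (hM n (by simp))) (norm_nonneg _)
  grw [factorial_div_pow_mul_exp_mul_cos_le hn hθ, mul_assoc]
  gcongr
  rcases le_or_gt |θ| ((n : ℝ) ^ (-α)) with hin | hout
  · exact le_add_of_le_of_nonneg
      (exp_mul_norm_sub_le_of_abs_le hn0 hε (by simpa only [Complex.ofReal_natCast]) hin)
      (by positivity)
  · exact le_add_of_nonneg_of_le (by positivity)
      (exp_mul_norm_sub_le_of_lt_abs hn0 (by simpa only [Complex.ofReal_natCast]) hout)

theorem norm_sub_le_mul_add_of_local_of_sphere {b : ℕ → ℂ}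
    (h : ∀ z, HasSum (fun k => b k * z ^ k / k !) (Complex.exp z * f z)) {n : ℕ} (hn : n ≠ 0)
    (hε : 0 ≤ ε)
    (hloc : ∀ z : ℂ, ‖z / n - 1‖ ≤ (n : ℝ) ^ (-α) →
      ‖f z - w‖ * exp (-γ * ‖z - n‖ / √n) ≤ ε)
    (hM : ∀ z : ℂ, ‖z‖ = n → ‖f z‖ ≤ M) :
    ‖b n - w‖ ≤ ε * (exp 1 * exp (γ ^ 2 * π ^ 2 / 4) * √π / 2) +
      exp 1 * (√n * (M + ‖w‖) * exp (-(2 / π ^ 2) * (n : ℝ) ^ (1 - 2 * α))) := by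
  have hn0 : (0 : ℝ) < n := by positivity
  have hπ : -π ≤ π := by linarith [pi_pos]
  set K := ε * exp (γ ^ 2 * π ^ 2 / 4)
  set B := (M + ‖w‖) * exp (-(2 / π ^ 2) * (n : ℝ) ^ (1 - 2 * α))
  have hint : ∫ θ in -π..π, n ! / (n : ℝ) ^ n * exp (n * cos θ) * ‖f (circleMap 0 n θ) - w‖ ≤
      ∫ θ in -π..π, exp 1 * √n * (K * exp (-(n / π ^ 2) * θ ^ 2) + B) := by
    rw [intervalIntegral.integral_of_le hπ, intervalIntegral.integral_of_le hπ]
    -- only the majorant has to be integrable, so the regularity of `f` is never needed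
    refine integral_mono_of_nonneg (ae_of_all _ fun θ => by positivity)
      (Continuous.integrableOn_Ioc (by fun_prop))
      ((ae_restrict_iff' measurableSet_Ioc).2 (ae_of_all _ fun θ hθ => ?_))
    exact factorial_div_pow_mul_exp_mul_cos_mul_norm_sub_le hn hε hloc hM
      (abs_le.2 ⟨hθ.1.le, hθ.2⟩)
  calc ‖b n - w‖
      ≤ (2 * π)⁻¹ * ∫ θ in -π..π, n ! / (n : ℝ) ^ n * exp (n * cos θ) *
          ‖f (circleMap 0 n θ) - w‖ := norm_sub_le_intervalIntegral_exp_mul h w hn0 n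
    _ ≤ (2 * π)⁻¹ * ∫ θ in -π..π, exp 1 * √n * (K * exp (-(n / π ^ 2) * θ ^ 2) + B) := by
        gcongr
    _ = (2 * π)⁻¹ * (exp 1 * K * (√n * ∫ θ in -π..π, exp (-(n / π ^ 2) * θ ^ 2)) +
          2 * π * (exp 1 * √n * B)) := by
        rw [intervalIntegral.integral_const_mul, intervalIntegral.integral_add
          (Continuous.intervalIntegrable (by fun_prop) _ _) intervalIntegrable_const,
          intervalIntegral.integral_const_mul, intervalIntegral.integral_const, smul_eq_mul]
        ring
    _ ≤ (2 * π)⁻¹ * (exp 1 * K * (π * √π) + 2 * π * (exp 1 * √n * B)) := by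
        grw [sqrt_mul_intervalIntegral_exp_neg_div_sq_mul_sq_le hn0]
    _ = _ := by
        simp only [K, B]
        field_simp

end CauchyIntegrand

theorem tendsto_mul_sqrt_sub_mul_rpow_atBot (a : ℝ) {c β : ℝ} (hc : 0 < c) (hβ : 1 / 2 < β) :
    Tendsto (fun x : ℝ => a * √x - c * x ^ β) atTop atBot := by
  have hratio : Tendsto (fun x : ℝ => a * x ^ (1 / 2 - β) - c) atTop (𝓝 (a * 0 - c)) := by
    have := tendsto_rpow_neg_atTop (by linarith : 0 < β - 1 / 2)
    rw [neg_sub] at this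
    exact (this.const_mul a).sub_const c
  refine ((tendsto_rpow_atTop (by linarith : 0 < β)).atTop_mul_neg (by linarith) hratio).congr' ?_
  filter_upwards [eventually_gt_atTop 0] with x hx
  rw [mul_sub, mul_left_comm, ← Real.rpow_add hx, add_sub_cancel, Real.sqrt_eq_rpow]
  ring

theorem tendsto_sqrt_mul_exp_mul_sqrt_mul_exp_neg_rpow (γ : ℝ) {c β : ℝ} (hc : 0 < c)
    (hβ : 1 / 2 < β) :
    Tendsto (fun x : ℝ => √x * exp (γ * √x) * exp (-c * x ^ β)) atTop (𝓝 0) := by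
  have hbound : Tendsto (fun x : ℝ => exp ((|γ| + 1) * √x - c * x ^ β)) atTop (𝓝 0) :=
    tendsto_exp_atBot.comp (tendsto_mul_sqrt_sub_mul_rpow_atBot _ hc hβ)
  refine squeeze_zero (fun x => by positivity) (fun x => ?_) hbound
  have hsqrt : √x ≤ exp √x := by linarith [add_one_le_exp √x]
  calc √x * exp (γ * √x) * exp (-c * x ^ β)
      ≤ exp √x * exp (|γ| * √x) * exp (-c * x ^ β) := by
        gcongr
        exact le_abs_self γ
    _ = exp ((|γ| + 1) * √x - c * x ^ β) := by
        rw [← exp_add, ← exp_add]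
        ring_nf

theorem tendsto_sqrt_mul_add_mul_exp_neg_rpow (C D γ : ℝ) {c β : ℝ} (hc : 0 < c)
    (hβ : 1 / 2 < β) :
    Tendsto (fun x : ℝ => √x * (C * exp (γ * √x) + D) * exp (-c * x ^ β)) atTop (𝓝 0) := by
  have := ((tendsto_sqrt_mul_exp_mul_sqrt_mul_exp_neg_rpow γ hc hβ).const_mul C).add
    ((tendsto_sqrt_mul_exp_mul_sqrt_mul_exp_neg_rpow 0 hc hβ).const_mul D)
  rw [mul_zero, mul_zero, add_zero] at this
  refine this.congr fun x => ?_
  rw [zero_mul, exp_zero]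
  ring

theorem tendsto_of_forall_eventually_norm_sub_le {ι E : Type*} [SeminormedAddCommGroup E]
    {l : Filter ι} {u : ι → E} {L : E} (κ : ℝ) {H : ι → ℝ} (hH : Tendsto H l (𝓝 0))
    (h : ∀ ε > 0, ∀ᶠ i in l, ‖u i - L‖ ≤ ε * κ + H i) : Tendsto u l (𝓝 L) := by
  refine tendsto_iff_norm_sub_tendsto_zero.2 (Metric.tendsto_nhds.2 fun δ hδ => ?_)
  have hε : 0 < δ / (2 * (|κ| + 1)) := by positivity
  have hεκ : δ / (2 * (|κ| + 1)) * κ < δ / 2 := by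
    rw [div_mul_eq_mul_div, div_lt_div_iff₀ (by positivity) two_pos]
    nlinarith [le_abs_self κ]
  filter_upwards [h _ hε, hH.eventually (gt_mem_nhds (half_pos hδ))] with i hi hHi
  rw [Real.dist_0_eq_abs, abs_norm]
  linarith

theorem depoissonization
    (f : ℕ → ℂ → ℂ) (a : ℕ → ℕ → ℂ)
    (hseries : ∀ n : ℕ, ∀ z : ℂ,
      HasSum (fun k : ℕ => a n k * z ^ k / (Nat.factorial k : ℂ)) (Complex.exp z * f n z))
    (finf : ℂ) (γ : ℝ) (α : ℝ) (hα : α ∈ Set.Ioo (0 : ℝ) (1 / 4))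
    (hmax : ∃ C : ℝ, ∀ n : ℕ, 1 ≤ n → ∀ z : ℂ, ‖z‖ = n →
      ‖f n z‖ ≤ C * Real.exp (γ * Real.sqrt n))
    (hloc : ∀ ε : ℝ, 0 < ε → ∃ N : ℕ, ∀ n : ℕ, N ≤ n → ∀ z : ℂ,
      ‖z / n - 1‖ ≤ (n : ℝ) ^ (-α) →
      ‖f n z - finf‖ * Real.exp (-γ * ‖z - n‖ / Real.sqrt n) ≤ ε) :
    Tendsto (fun n : ℕ => a n n) atTop (nhds finf) := by
  obtain ⟨C, hC⟩ := hmax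
  have hβ : 1 / 2 < 1 - 2 * α := by linarith [hα.2]
  have htail := ((tendsto_sqrt_mul_add_mul_exp_neg_rpow C ‖finf‖ γ
    (by positivity : (0 : ℝ) < 2 / π ^ 2) hβ).comp tendsto_natCast_atTop_atTop).const_mul (exp 1)
  rw [mul_zero] at htail
  refine tendsto_of_forall_eventually_norm_sub_le (exp 1 * exp (γ ^ 2 * π ^ 2 / 4) * √π / 2)
    htail fun ε hε => ?_
  obtain ⟨N, hN⟩ := hloc ε hε
  filter_upwards [eventually_ge_atTop (max N 1)] with n hn
  exact norm_sub_le_mul_add_of_local_of_sphere (hseries n) (by omega) hε.le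
    (hN n (le_of_max_le_left hn)) (hC n (le_of_max_le_right hn))
end
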